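/- arXiv:2001.02484 — 3 statements merged into one kernel-verified Lean document; each statement's English description precedes it below -/
import Mathlib

section
/- Let G be a bridgeless cubic graph, let r ∈ (4,5), let (B, W) be an r-bipartition of G, and let M be a perfect matching of G every edge of which has one end in B and the other in W. Then for every integer t ≥ 1, the (2t+1)-regular multigraph G + (2t−2)M admits a nowhere-zero (2 + 2(r−2)/(r + (2t−3)(r−2)))-flow; in particular φ_c(G + (2t−2)M) ≤ 2 + 2(r−2)/(r + (2t−3)(r−2)). -/
/-!
Basic theory of finite multigraphs (parallel edges allowed, no loops),
nowhere-zero `r`-flows, the circular flow number, proper edge colorings,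
the chromatic index, class 1 / class 2, perfect matchings, edge cuts,
`r`-bipartitions, and the operation of adding parallel copies of a matching.
-/

/-- A finite multigraph: a finite type of vertices, a finite type of edges,
each edge having an (ordered, for reference purposes) pair of distinct endpoints.
Parallel edges are allowed; loops are excluded. -/
structure Multigraph : Type 1 where
  V : Type
  E : Type
  vFinite : Finite V
  eFinite : Finite E
  ends : E → V × V
  no_loop : ∀ e, (ends e).1 ≠ (ends e).2

namespace Multigraph

variable (G : Multigraph)

instance : Finite G.V := G.vFinite
instance : Finite G.E := G.eFinite

/-- The first endpoint of an edge (w.r.t. the reference orientation). -/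
def tail (e : G.E) : G.V := (G.ends e).1

/-- The second endpoint of an edge (w.r.t. the reference orientation). -/
def head (e : G.E) : G.V := (G.ends e).2

/-- `v` is an endpoint of the edge `e`. -/
def Inc (v : G.V) (e : G.E) : Prop := G.tail e = v ∨ G.head e = v

open Classical in
/-- The endpoint of `e` other than `v`. -/
noncomputable def otherEnd (e : G.E) (v : G.V) : G.V :=
  if G.tail e = v then G.head e else G.tail e

/-- The degree of a vertex: the number of edges incident with it
(no loops, so no edge is counted twice). -/
noncomputable def degree (v : G.V) : ℕ := Nat.card {e : G.E // G.Inc v e}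

/-- `G` is `k`-regular. -/
def IsRegular (k : ℕ) : Prop := ∀ v, G.degree v = k

/-- The maximum degree `Δ(G)`. -/
noncomputable def maxDegree : ℕ := sSup (Set.range G.degree)

/-- Two distinct edges are adjacent if they share an endpoint. -/
def EAdj (e e' : G.E) : Prop := e ≠ e' ∧ ∃ v, G.Inc v e ∧ G.Inc v e'

/-- A proper edge coloring with `k` colors: adjacent edges get distinct colors. -/
def IsProperEdgeColoring {k : ℕ} (c : G.E → Fin k) : Prop :=
  ∀ e e', G.EAdj e e' → c e ≠ c e'

/-- The chromatic index `χ'(G)`. -/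
noncomputable def chromaticIndex : ℕ :=
  sInf {k | ∃ c : G.E → Fin k, G.IsProperEdgeColoring c}

/-- `G` is class 1 if `χ'(G) = Δ(G)`. -/
def IsClass1 : Prop := G.chromaticIndex = G.maxDegree

/-- `G` is class 2 if it is not class 1. -/
def IsClass2 : Prop := ¬ G.IsClass1

/-- A nowhere-zero `r`-flow: the orientation `D` is encoded by the signs of `f`
(a negative value means the edge is used against its reference direction), every
edge has absolute flow value in `[1, r-1]`, and Kirchhoff's law holds at every
vertex. -/
def IsNZFlow (r : ℝ) (f : G.E → ℝ) : Prop :=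
  (∀ e, 1 ≤ |f e| ∧ |f e| ≤ r - 1) ∧
  ∀ v : G.V, ∑ᶠ e ∈ {e | G.tail e = v}, f e = ∑ᶠ e ∈ {e | G.head e = v}, f e

/-- `G` admits a nowhere-zero `r`-flow. -/
def HasNZFlow (r : ℝ) : Prop := ∃ f, G.IsNZFlow r f

/-- The circular flow number `φ_c(G)`, as an extended real number:
the infimum of all real `r ≥ 2` such that `G` has a nowhere-zero `r`-flow
(`+∞` if there is no such `r`, e.g. if `G` has a bridge). -/
noncomputable def flowNumber : EReal :=
  sInf {x : EReal | ∃ r : ℝ, x = (r : EReal) ∧ 2 ≤ r ∧ G.HasNZFlow r}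

/-- A perfect matching: every vertex is incident with exactly one edge of `M`. -/
def IsPerfectMatching (M : Set G.E) : Prop :=
  ∀ v, ∃! e, e ∈ M ∧ G.Inc v e

/-- `G` is bipartite: the vertices can be 2-colored with every edge bichromatic. -/
def IsBipartite : Prop :=
  ∃ s : Set G.V, ∀ e, ¬ (G.tail e ∈ s ↔ G.head e ∈ s)

/-- The edge cut `∂_G(X)`: edges with exactly one end in `X`. -/
def cut (X : Set G.V) : Set G.E := {e | ¬ (G.tail e ∈ X ↔ G.head e ∈ X)}

/-- Add, for each `i : Fin k`, one new parallel copy of each edge of `M i`. -/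
noncomputable def addEdgeFamily {k : ℕ} (M : Fin k → Set G.E) : Multigraph where
  V := G.V
  E := G.E ⊕ ((i : Fin k) × ↥(M i))
  vFinite := by infer_instance
  eFinite := by infer_instance
  ends := Sum.elim G.ends (fun p => G.ends p.2.1)
  no_loop := by
    rintro (e | ⟨i, e⟩)
    · exact G.no_loop e
    · exact G.no_loop e.1

/-- `G + kM`: add `k` new parallel copies of each edge of `M`. -/
noncomputable def addCopies (M : Set G.E) (k : ℕ) : Multigraph :=
  G.addEdgeFamily (fun _ : Fin k => M)

/-- Delete a set of edges. -/
noncomputable def deleteEdges (M : Set G.E) : Multigraph where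
  V := G.V
  E := {e : G.E // e ∉ M}
  vFinite := G.vFinite
  eFinite := by infer_instance
  ends := fun e => G.ends e.1
  no_loop := fun e => G.no_loop e.1

/-- Vertex adjacency (there is an edge between `u` and `v`). -/
def VAdj (u v : G.V) : Prop := ∃ e, G.ends e = (u, v) ∨ G.ends e = (v, u)

/-- Reachability by walks. -/
def Reach : G.V → G.V → Prop := Relation.ReflTransGen G.VAdj

/-- `G` is connected. -/
def Connected : Prop := ∀ u v, G.Reach u v

/-- An edge is a bridge if its ends are not joined by a walk avoiding it. -/
def IsBridge (e : G.E) : Prop :=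
  ¬ (G.deleteEdges {e}).Reach (G.tail e) (G.head e)

/-- `G` is bridgeless. -/
def Bridgeless : Prop := ∀ e, ¬ G.IsBridge e

/-- An `r`-bipartition of (the vertex set of) a cubic graph. -/
def IsRBipartition (r : ℝ) (B W : Set G.V) : Prop :=
  B ∪ W = Set.univ ∧ B ∩ W = ∅ ∧
  ∀ X : Set G.V,
    (r / (r - 2)) * |((X ∩ B).ncard : ℝ) - ((X ∩ W).ncard : ℝ)| ≤ ((G.cut X).ncard : ℝ)

/-- A cubic graph `G` with a perfect matching `M` has the `M`-class-2 property
if `G + (2t-2)M` is class 2 for every integer `t ≥ 1`. -/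
def MClass2Property (M : Set G.E) : Prop :=
  ∀ t : ℕ, 1 ≤ t → (G.addCopies M (2 * t - 2)).IsClass2

/-- A cubic graph `G` with a perfect matching `M` has the `M`-class-1 property
if `G + (2t-2)M` is class 1 for every integer `t ≥ 2`. -/
def MClass1Property (M : Set G.E) : Prop :=
  ∀ t : ℕ, 2 ≤ t → (G.addCopies M (2 * t - 2)).IsClass1

/-- An `r`-graph: an `r`-regular multigraph in which every odd set of vertices
is left by at least `r` edges. -/
def IsRGraph (r : ℕ) : Prop :=
  G.IsRegular r ∧ ∀ X : Set G.V, Odd X.ncard → r ≤ (G.cut X).ncard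

end Multigraph

/-!
By Hoffman's circulation theorem, a multigraph has a nowhere-zero `r`-flow as soon as it has an
orientation in which every vertex set `X` satisfies `r · |out(X) - in(X)| ≤ (r - 2) · |∂X|`.
For `G + 2mM`, orient `M` and `m` of its copies from `B` to `W`, the other `m` copies back, and
the 2-factor `G - M` along its cycles. Then `out(X) - in(X) = |X ∩ B| - |X ∩ W|`, which is at
most `(r - 2) / r · |∂_G X|` by the `r`-bipartition and at most `|∂_M X|` because `M` pairs `B`
with `W`. As `|∂_{G + 2mM} X| = |∂_G X| + 2m · |∂_M X|`, the two bounds add up to the required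
one for the flow value `2 + 2(r - 2) / (r + (2m - 1)(r - 2))`.
-/

open Finset Filter Topology

section Circulation

variable {V E : Type*} (tl hd : E → V)

noncomputable def crossSign (X : Set V) (e : E) : ℝ :=
  X.indicator 1 (tl e) - X.indicator 1 (hd e)

variable [Fintype E]

noncomputable def netOutflow (f : E → ℝ) (X : Set V) : ℝ :=
  ∑ e, f e * crossSign tl hd X e

def IsCirculation (f : E → ℝ) : Prop :=
  ∀ v, netOutflow tl hd f {v} = 0

def ResidualAdj (lo hi f : E → ℝ) (u w : V) : Prop :=
  ∃ e, (tl e = u ∧ hd e = w ∧ f e < hi e) ∨ (tl e = w ∧ hd e = u ∧ lo e < f e)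

lemma netOutflow_add (f g : E → ℝ) (X : Set V) :
    netOutflow tl hd (f + g) X = netOutflow tl hd f X + netOutflow tl hd g X := by
  simp only [netOutflow, Pi.add_apply, add_mul, Finset.sum_add_distrib]

lemma netOutflow_smul (c : ℝ) (f : E → ℝ) (X : Set V) :
    netOutflow tl hd (c • f) X = c * netOutflow tl hd f X := by
  simp only [netOutflow, Pi.smul_apply, smul_eq_mul, Finset.mul_sum, mul_assoc]

lemma netOutflow_single [DecidableEq E] (e : E) (c : ℝ) (X : Set V) :
    netOutflow tl hd (Pi.single e c) X = c * crossSign tl hd X e := by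
  simp [netOutflow, Pi.single_apply]

lemma netOutflow_indicator {F : Set E} [Fintype F] (a : E → ℝ) (X : Set V) :
    netOutflow tl hd (F.indicator a) X = ∑ e : F, a e * crossSign tl hd X e := by
  classical
  simp only [netOutflow, Set.indicator_apply, ite_mul, zero_mul]
  rw [← Finset.sum_filter, Finset.sum_subtype _ (p := (· ∈ F)) (by simp)]

lemma sum_netOutflow_singleton (f : E → ℝ) (X : Finset V) :
    ∑ v ∈ X, netOutflow tl hd f {v} = netOutflow tl hd f X := by
  classical
  simp only [netOutflow, crossSign, Set.indicator_apply, Set.mem_singleton_iff,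
    Finset.mem_coe, Pi.one_apply]
  rw [Finset.sum_comm]
  refine Finset.sum_congr rfl fun e _ => ?_
  rw [← Finset.mul_sum, Finset.sum_sub_distrib, Finset.sum_ite_eq, Finset.sum_ite_eq]

lemma netOutflow_univ [Finite V] (f : E → ℝ) : netOutflow tl hd f Set.univ = 0 := by
  simp [netOutflow, crossSign]

lemma IsCirculation.netOutflow_eq_zero [Finite V] {f : E → ℝ} (hf : IsCirculation tl hd f)
    (X : Set V) : netOutflow tl hd f X = 0 := by
  rw [← X.toFinite.coe_toFinset, ← sum_netOutflow_singleton]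
  exact Finset.sum_eq_zero fun v _ => hf v

variable {tl hd}

lemma exists_augmenting_of_reflTransGen {lo hi f : E → ℝ} {a b : V}
    (hab : Relation.ReflTransGen (ResidualAdj tl hd lo hi f) a b) :
    ∃ g : E → ℝ, (∀ X, netOutflow tl hd g X = X.indicator 1 a - X.indicator 1 b) ∧
      (∀ e, 0 < g e → f e < hi e) ∧ (∀ e, g e < 0 → lo e < f e) := by
  classical
  induction hab with
  | refl => exact ⟨0, fun X => by simp [netOutflow], by simp, by simp⟩
  | @tail u w _ huw ih =>
    obtain ⟨g, hgX, hgpos, hgneg⟩ := ih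
    obtain ⟨e, c, hcpos, hcneg, hcross⟩ : ∃ e, ∃ c : ℝ,
        (0 < c → f e < hi e) ∧ (c < 0 → lo e < f e) ∧
        ∀ X : Set V, c * crossSign tl hd X e = X.indicator 1 u - X.indicator 1 w := by
      obtain ⟨e, ⟨rfl, rfl, he⟩ | ⟨rfl, rfl, he⟩⟩ := huw
      · exact ⟨e, 1, fun _ => he, by norm_num, fun X => by simp [crossSign]⟩
      · exact ⟨e, -1, by norm_num, fun _ => he, fun X => by simp [crossSign]⟩
    refine ⟨g + Pi.single e c, fun X => ?_, fun e' he' => ?_, fun e' he' => ?_⟩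
    · rw [netOutflow_add, netOutflow_single, hgX, hcross]
      ring
    · rcases eq_or_ne e' e with rfl | hne
      · rw [Pi.add_apply, Pi.single_eq_same] at he'
        by_cases hg : 0 < g e'
        · exact hgpos e' hg
        · exact hcpos (by linarith)
      · rw [Pi.add_apply, Pi.single_eq_of_ne hne, add_zero] at he'
        exact hgpos e' he'
    · rcases eq_or_ne e' e with rfl | hne
      · rw [Pi.add_apply, Pi.single_eq_same] at he'
        by_cases hg : g e' < 0
        · exact hgneg e' hg
        · exact hcneg (by linarith)
      · rw [Pi.add_apply, Pi.single_eq_of_ne hne, add_zero] at he'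
        exact hgneg e' he'

lemma eventually_add_smul_mem_Icc {lo hi f g : E → ℝ} (hf : f ∈ Set.Icc lo hi)
    (hpos : ∀ e, 0 < g e → f e < hi e) (hneg : ∀ e, g e < 0 → lo e < f e) :
    ∀ᶠ δ in 𝓝[>] (0 : ℝ), f + δ • g ∈ Set.Icc lo hi := by
  simp only [Set.mem_Icc, Pi.le_def, ← forall_and]
  refine Filter.eventually_all.2 fun e => ?_
  have hlim : Tendsto (fun δ : ℝ => f e + δ * g e) (𝓝[>] 0) (𝓝 (f e)) := by
    have : Tendsto (fun δ : ℝ => f e + δ * g e) (𝓝 0) (𝓝 (f e + 0 * g e)) :=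
      (Continuous.tendsto (by fun_prop) 0)
    simpa using this.mono_left nhdsWithin_le_nhds
  have hδ : ∀ᶠ δ in 𝓝[>] (0 : ℝ), 0 < δ := self_mem_nhdsWithin
  simp only [Pi.add_apply, Pi.smul_apply, smul_eq_mul]
  refine .and ?_ ?_
  · rcases lt_or_ge (g e) 0 with hg | hg
    · exact (hlim.eventually (lt_mem_nhds (hneg e hg))).mono fun _ h => h.le
    · filter_upwards [hδ] with δ hδ
      nlinarith [hf.1 e]
  · rcases lt_or_ge 0 (g e) with hg | hg
    · exact (hlim.eventually (gt_mem_nhds (hpos e hg))).mono fun _ h => h.le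
    · filter_upwards [hδ] with δ hδ
      nlinarith [hf.2 e]

end Circulation

section Hoffman

variable {V E : Type*} [Fintype E] {tl hd : E → V}

open Classical in
lemma netOutflow_nonneg_of_residual_closed {lo hi f : E → ℝ} {S : Set V}
    (hS : ∀ u w, u ∈ S → ResidualAdj tl hd lo hi f u w → w ∈ S)
    (hcut : ∑ e with hd e ∈ S ∧ tl e ∉ S, lo e ≤
      ∑ e with tl e ∈ S ∧ hd e ∉ S, hi e) :
    0 ≤ netOutflow tl hd f S := by
  -- edges leaving `S` are saturated and edges entering `S` are at their lower bound
  have hedge : ∀ e, (if tl e ∈ S ∧ hd e ∉ S then hi e else 0) -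
      (if hd e ∈ S ∧ tl e ∉ S then lo e else 0) ≤ f e * crossSign tl hd S e := by
    intro e
    by_cases htl : tl e ∈ S <;> by_cases hhd : hd e ∈ S <;> simp [crossSign, htl, hhd]
    · by_contra! hlt
      exact hhd (hS _ _ htl ⟨e, .inl ⟨rfl, rfl, hlt⟩⟩)
    · by_contra! hlt
      exact htl (hS _ _ hhd ⟨e, .inr ⟨rfl, rfl, hlt⟩⟩)
  rw [Finset.sum_filter, Finset.sum_filter] at hcut
  have := Finset.sum_le_sum fun e (_ : e ∈ univ) => hedge e
  rw [Finset.sum_sub_distrib] at this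
  unfold netOutflow
  linarith

variable [Fintype V]

variable (tl hd) in
noncomputable def totalImbalance (f : E → ℝ) : ℝ :=
  ∑ v, |netOutflow tl hd f {v}|

lemma exists_totalImbalance_lt {lo hi f : E → ℝ} (hf : f ∈ Set.Icc lo hi) {v₀ w : V}
    (hv₀ : netOutflow tl hd f {v₀} < 0) (hw : 0 < netOutflow tl hd f {w})
    (hreach : Relation.ReflTransGen (ResidualAdj tl hd lo hi f) v₀ w) :
    ∃ f' ∈ Set.Icc lo hi, totalImbalance tl hd f' < totalImbalance tl hd f := by
  classical
  obtain ⟨g, hg, hgpos, hgneg⟩ := exists_augmenting_of_reflTransGen hreach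
  obtain ⟨δ, hδf, hδ, hδv₀w⟩ := ((eventually_add_smul_mem_Icc hf hgpos hgneg).and
    (Ioo_mem_nhdsGT (lt_min (neg_pos.2 hv₀) hw))).exists
  have hv₀w : v₀ ≠ w := by rintro rfl; linarith
  have hnet : ∀ v, netOutflow tl hd (f + δ • g) {v} = netOutflow tl hd f {v} +
      δ * ((if v₀ = v then 1 else 0) - (if w = v then 1 else 0)) := fun v => by
    simp only [netOutflow_add, netOutflow_smul, hg, Set.indicator_apply, Set.mem_singleton_iff,
      Pi.one_apply]
  have hδ₀ := min_le_left (-netOutflow tl hd f {v₀}) (netOutflow tl hd f {w})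
  have hδw := min_le_right (-netOutflow tl hd f {v₀}) (netOutflow tl hd f {w})
  refine ⟨f + δ • g, hδf, Finset.sum_lt_sum (fun v _ => ?_) ⟨v₀, mem_univ _, ?_⟩⟩
  · rw [hnet]
    by_cases h₀ : v₀ = v
    · subst h₀
      rw [if_pos rfl, if_neg hv₀w.symm, abs_of_neg hv₀, abs_of_nonpos (by linarith)]
      linarith
    by_cases hw' : w = v
    · subst hw'
      rw [if_neg h₀, if_pos rfl, abs_of_pos hw, abs_of_nonneg (by linarith)]
      linarith
    simp [h₀, hw']
  · rw [hnet, if_pos rfl, if_neg hv₀w.symm, abs_of_neg hv₀, abs_of_nonpos (by linarith)]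
    linarith

open Classical in
theorem exists_circulation_of_cut_condition {lo hi : E → ℝ} (hlo : lo ≤ hi)
    (hcut : ∀ X : Set V,
      ∑ e with hd e ∈ X ∧ tl e ∉ X, lo e ≤ ∑ e with tl e ∈ X ∧ hd e ∉ X, hi e) :
    ∃ f ∈ Set.Icc lo hi, IsCirculation tl hd f := by
  -- a flow of least total imbalance in the box is a circulation: otherwise an augmenting path
  -- would lower the imbalance, or the set it cannot reach would violate the cut condition
  have hcont : Continuous (totalImbalance tl hd) := by
    unfold totalImbalance netOutflow
    fun_prop
  obtain ⟨f, hf, hmin⟩ :=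
    isCompact_Icc.exists_isMinOn (Set.nonempty_Icc.2 hlo) hcont.continuousOn
  refine ⟨f, hf, ?_⟩
  by_contra hnot
  obtain ⟨v₀, hv₀⟩ : ∃ v₀, netOutflow tl hd f {v₀} < 0 := by
    by_contra! hnonneg
    refine hnot fun v => (Finset.sum_eq_zero_iff_of_nonneg fun v _ => hnonneg v).1 ?_ v
      (mem_univ v)
    rw [sum_netOutflow_singleton, coe_univ, netOutflow_univ]
  set S := {w | Relation.ReflTransGen (ResidualAdj tl hd lo hi f) v₀ w}
  by_cases hS : ∃ w ∈ S, 0 < netOutflow tl hd f {w}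
  · obtain ⟨w, hw, hwpos⟩ := hS
    obtain ⟨f', hf', hlt⟩ := exists_totalImbalance_lt hf hv₀ hwpos hw
    exact hlt.not_ge (isMinOn_iff.1 hmin f' hf')
  · push Not at hS
    have hneg : netOutflow tl hd f S < 0 := by
      rw [← S.toFinite.coe_toFinset, ← sum_netOutflow_singleton, ← Finset.sum_const_zero]
      exact Finset.sum_lt_sum (fun v hv => hS v (S.toFinite.mem_toFinset.1 hv))
        ⟨v₀, S.toFinite.mem_toFinset.2 .refl, hv₀⟩
    exact hneg.not_ge (netOutflow_nonneg_of_residual_closed (fun _ _ hu huw => .tail hu huw)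
      (hcut S))

end Hoffman

section

variable {V : Type*}

noncomputable def bipartitionSign (B W : Set V) : V → ℝ := B.indicator 1 - W.indicator 1

lemma sum_indicator_one_eq_ncard [Fintype V] (S : Set V) :
    ∑ v, S.indicator (1 : V → ℝ) v = S.ncard := by
  classical
  simp [Set.indicator_apply, Finset.sum_boole, Set.ncard_eq_toFinset_card']

lemma sum_indicator_bipartitionSign [Fintype V] (B W X : Set V) :
    ∑ v, X.indicator (bipartitionSign B W) v = ((X ∩ B).ncard : ℝ) - (X ∩ W).ncard := by
  rw [bipartitionSign, Set.indicator_sub', Set.indicator_indicator, Set.indicator_indicator]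
  simp only [Pi.sub_apply, Finset.sum_sub_distrib, sum_indicator_one_eq_ncard]

lemma bipartitionSign_of_mem_left {B W : Set V} (hBW : Disjoint B W) {v : V} (hv : v ∈ B) :
    bipartitionSign B W v = 1 := by
  simp [bipartitionSign, hv, hBW.notMem_of_mem_left hv]

lemma bipartitionSign_of_mem_right {B W : Set V} (hBW : Disjoint B W) {v : V} (hv : v ∈ W) :
    bipartitionSign B W v = -1 := by
  simp [bipartitionSign, hv, hBW.notMem_of_mem_right hv]

end

namespace Multigraph

section

variable (G : Multigraph)

lemma tail_ne_head (e : G.E) : G.tail e ≠ G.head e := G.no_loop e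

lemma ncard_cut_eq_sum_abs_crossSign [Fintype G.E] (X : Set G.V) :
    ((G.cut X).ncard : ℝ) = ∑ e, |crossSign G.tail G.head X e| := by
  classical
  rw [Set.ncard_eq_toFinset_card', cut, Set.toFinset_ofPred, Finset.natCast_card_filter]
  refine Finset.sum_congr rfl fun e _ => ?_
  by_cases htl : G.tail e ∈ X <;> by_cases hhd : G.head e ∈ X <;> simp [crossSign, htl, hhd]

lemma finsum_tail_sub_finsum_head [Fintype G.E] (f : G.E → ℝ) (v : G.V) :
    ∑ᶠ e ∈ {e | G.tail e = v}, f e - ∑ᶠ e ∈ {e | G.head e = v}, f e =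
      netOutflow G.tail G.head f {v} := by
  classical
  simp only [finsum_eq_sum_of_fintype, Set.mem_ofPred_eq, finsum_eq_if, netOutflow, crossSign,
    Set.indicator_apply, Set.mem_singleton_iff, Pi.one_apply, mul_sub, mul_ite, mul_one, mul_zero,
    Finset.sum_sub_distrib]

/-- `σ` encodes an orientation: `σ e = 1` keeps the reference direction of `e`, `σ e = -1`
reverses it, so `netOutflow σ X` counts the edges leaving `X` minus those entering it. -/
theorem hasNZFlow_of_sign_balance [Fintype G.E] {r : ℝ} (hr : 2 ≤ r)
    {σ : G.E → ℝ} (hσ : ∀ e, |σ e| = 1)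
    (hbal : ∀ X : Set G.V, r * |netOutflow G.tail G.head σ X| ≤ (r - 2) * (G.cut X).ncard) :
    G.HasNZFlow r := by
  classical
  have := Fintype.ofFinite G.V
  -- admissible values on `e`: `[1, r - 1]` if `σ e = 1`, `[1 - r, -1]` if `σ e = -1`
  set lo : G.E → ℝ := fun e => (r * σ e - (r - 2)) / 2
  set hi : G.E → ℝ := fun e => (r * σ e + (r - 2)) / 2
  have hcut : ∀ X : Set G.V, ∑ e with G.head e ∈ X ∧ G.tail e ∉ X, lo e ≤
      ∑ e with G.tail e ∈ X ∧ G.head e ∉ X, hi e := by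
    intro X
    have hedge : ∀ e, (if G.tail e ∈ X ∧ G.head e ∉ X then hi e else 0) -
        (if G.head e ∈ X ∧ G.tail e ∉ X then lo e else 0) =
          ((r - 2) * |crossSign G.tail G.head X e| +
            r * (σ e * crossSign G.tail G.head X e)) / 2 := by
      intro e
      by_cases htl : G.tail e ∈ X <;> by_cases hhd : G.head e ∈ X <;>
        simp [crossSign, htl, hhd, lo, hi] <;> ring
    have hsum := Finset.sum_congr rfl fun e (_ : e ∈ univ) => hedge e
    rw [Finset.sum_sub_distrib, ← Finset.sum_div, Finset.sum_add_distrib, ← Finset.mul_sum,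
      ← Finset.mul_sum, ← ncard_cut_eq_sum_abs_crossSign, ← netOutflow] at hsum
    rw [Finset.sum_filter, Finset.sum_filter, ← sub_nonneg, hsum]
    have := hbal X
    have := neg_abs_le (netOutflow G.tail G.head σ X)
    nlinarith
  obtain ⟨f, hf, hcirc⟩ := exists_circulation_of_cut_condition (lo := lo) (hi := hi)
    (fun e => by simp only [lo, hi]; linarith) hcut
  refine ⟨f, fun e => ?_, fun v => sub_eq_zero.1 ?_⟩
  · have hlo := hf.1 e
    have hhi := hf.2 e
    simp only [lo, hi] at hlo hhi
    rcases (abs_eq zero_le_one).1 (hσ e) with h | h <;> rw [h] at hlo hhi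
    · rw [abs_of_pos (by linarith)]; constructor <;> linarith
    · rw [abs_of_neg (by linarith)]; constructor <;> linarith
  · rw [finsum_tail_sub_finsum_head, hcirc v]

lemma degree_eq_card_filter [Fintype G.E] [DecidableEq G.V] (v : G.V) :
    G.degree v = #{e | G.tail e = v ∨ G.head e = v} := by
  simp only [degree, Inc]
  rw [Nat.card_eq_fintype_card, Fintype.card_subtype]

noncomputable instance [Fintype G.E] {M : Set G.E} [DecidablePred (· ∈ M)] :
    Fintype (G.deleteEdges M).E :=
  inferInstanceAs (Fintype {e // e ∉ M})

lemma isRegular_deleteEdges {M : Set G.E} (hM : G.IsPerfectMatching M) {k : ℕ}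
    (hreg : G.IsRegular (k + 1)) : (G.deleteEdges M).IsRegular k := by
  intro (v : G.V)
  obtain ⟨e₀, ⟨he₀M, he₀⟩, huniq⟩ := hM v
  have hM1 : ({e | G.Inc v e} ∩ M).ncard = 1 :=
    Set.ncard_eq_one.2 ⟨e₀, by
      ext e
      simpa using ⟨fun h => huniq e ⟨h.2, h.1⟩, fun h => h ▸ ⟨he₀, he₀M⟩⟩⟩
  have hsplit := Set.ncard_inter_add_ncard_sdiff_eq_ncard {e | G.Inc v e} M
  have hdel : (G.deleteEdges M).degree v = ({e | G.Inc v e} \ M).ncard :=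
    Nat.card_congr ((Equiv.subtypeSubtypeEquivSubtypeInter (· ∉ M) (G.Inc v)).trans
      (Equiv.subtypeEquivRight fun _ => and_comm))
  have hdeg : {e | G.Inc v e}.ncard = k + 1 := hreg v
  omega

lemma exists_injective_end_of_degree_le_two [Fintype G.E] (hdeg : ∀ v, G.degree v ≤ 2) :
    ∃ f : G.E → G.V, Function.Injective f ∧ ∀ e, f e = G.tail e ∨ f e = G.head e := by
  classical
  refine ((all_card_le_biUnion_card_iff_exists_injective fun e => {G.tail e, G.head e}).1
    fun s => ?_).imp fun f hf => ⟨hf.1, fun e => by simpa using hf.2 e⟩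
  -- Hall's condition by double counting edge-end incidences
  have := card_mul_le_card_mul (fun e v => v ∈ ({G.tail e, G.head e} : Finset G.V))
    (s := s) (t := s.biUnion fun e => {G.tail e, G.head e}) (m := 2) (n := 2)
    (fun e he => (card_pair (G.tail_ne_head e)).symm.le.trans
      (card_le_card fun v hv => mem_filter.2 ⟨mem_biUnion.2 ⟨e, he, hv⟩, hv⟩))
    (fun v _ => (card_le_card fun e he => by
        simpa [eq_comm] using (mem_filter.1 he).2).trans
      ((G.degree_eq_card_filter v).symm.le.trans (hdeg v)))
  omega

theorem exists_sign_circulation_of_isRegular_two [Fintype G.E] (h2 : G.IsRegular 2) :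
    ∃ σ : G.E → ℝ, (∀ e, |σ e| = 1) ∧ IsCirculation G.tail G.head σ := by
  classical
  have := Fintype.ofFinite G.V
  -- orient each edge away from its chosen end: every vertex then has out-degree at most one
  obtain ⟨f, hinj, hf⟩ := G.exists_injective_end_of_degree_le_two fun v => (h2 v).le
  set σ : G.E → ℝ := fun e => if f e = G.tail e then 1 else -1
  have hedge : ∀ v e, σ e * crossSign G.tail G.head {v} e =
      2 * (if f e = v then 1 else 0) - (if G.tail e = v ∨ G.head e = v then 1 else 0) := by
    intro v e
    have hne := G.tail_ne_head e
    rcases hf e with h | h <;> by_cases ht : G.tail e = v <;> by_cases hh : G.head e = v <;>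
      simp [σ, crossSign, h, ht, hh, hne.symm] <;> grind
  have hle : ∀ v, netOutflow G.tail G.head σ {v} ≤ 0 := by
    intro v
    have hout : (#{e | f e = v} : ℝ) ≤ 1 := by
      exact_mod_cast (card_le_one.2 fun a ha b hb =>
        hinj ((mem_filter.1 ha).2.trans (mem_filter.1 hb).2.symm) : #{e | f e = v} ≤ 1)
    rw [netOutflow, sum_congr rfl fun e _ => hedge v e, sum_sub_distrib, ← mul_sum, sum_boole,
      sum_boole, ← degree_eq_card_filter, h2 v]
    push_cast
    linarith
  refine ⟨σ, fun e => by by_cases h : f e = G.tail e <;> simp [σ, h], fun v => ?_⟩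
  have hsum : ∑ v, netOutflow G.tail G.head σ {v} = 0 := by
    rw [sum_netOutflow_singleton, coe_univ, netOutflow_univ]
  exact (sum_eq_zero_iff_of_nonpos fun v _ => hle v).1 hsum v (mem_univ v)

lemma sum_tail_add_head_of_isPerfectMatching {β : Type*} [AddCommMonoid β] [Fintype G.V]
    {M : Set G.E} [Fintype M] (hM : G.IsPerfectMatching M) (h : G.V → β) :
    ∑ e : M, (h (G.tail e) + h (G.head e)) = ∑ v, h v := by
  classical
  have hends : ∀ e : G.E,
      ∑ v, (if G.Inc v e then h v else 0) = h (G.tail e) + h (G.head e) := by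
    intro e
    rw [← sum_filter, show ({v | G.Inc v e} : Finset G.V) = {G.tail e, G.head e} by
      ext; simp [Inc, eq_comm], sum_pair (G.tail_ne_head e)]
  have hvert : ∀ v, ∑ e : M, (if G.Inc v e then h v else 0) = h v := by
    intro v
    obtain ⟨e, ⟨heM, hinc⟩, huniq⟩ := hM v
    rw [Fintype.sum_eq_single ⟨e, heM⟩ fun e' hne =>
      if_neg fun hinc' => hne (Subtype.ext (huniq _ ⟨e'.2, hinc'⟩)), if_pos hinc]
  simp only [← hends]
  rw [sum_comm]
  exact sum_congr rfl fun v _ => hvert v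

end

variable {G : Multigraph} {B W : Set G.V} {M : Set G.E} {k : ℕ}

def Joins (M : Set G.E) (B W : Set G.V) : Prop :=
  ∀ e ∈ M, (G.tail e ∈ B ∧ G.head e ∈ W) ∨ (G.tail e ∈ W ∧ G.head e ∈ B)

theorem exists_sign_circulation_of_isPerfectMatching [Fintype G.E] (hM : G.IsPerfectMatching M)
    (hcubic : G.IsRegular 3) :
    ∃ τ : G.E → ℝ,
      (∀ e ∉ M, |τ e| = 1) ∧ (∀ e ∈ M, τ e = 0) ∧ IsCirculation G.tail G.head τ := by
  classical
  obtain ⟨τ, hτ, hcirc⟩ :=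
    (G.deleteEdges M).exists_sign_circulation_of_isRegular_two (G.isRegular_deleteEdges hM hcubic)
  refine ⟨fun e => if h : e ∈ M then 0 else τ ⟨e, h⟩,
    fun e he => by simpa [he] using hτ ⟨e, he⟩, fun e he => by simp [he], fun v => ?_⟩
  rw [netOutflow, ← Fintype.sum_subtype_add_sum_subtype (· ∈ M)]
  simp only [Subtype.coe_prop, dif_pos, zero_mul, sum_const_zero, zero_add]
  refine (Fintype.sum_congr _ _ fun e => ?_).trans (hcirc v)
  rw [dif_neg e.2]
  rfl

noncomputable def alternatingLift (σ : G.E → ℝ) : (G.addCopies M k).E → ℝ :=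
  Sum.elim σ fun p => (-1) ^ (p.1 : ℕ) * σ p.2

lemma abs_alternatingLift {σ : G.E → ℝ} (hσ : ∀ e, |σ e| = 1) (ee : (G.addCopies M k).E) :
    |alternatingLift σ ee| = 1 := by
  rcases ee with e | ⟨i, e⟩ <;> simp [alternatingLift, abs_mul, hσ]

noncomputable instance [Fintype G.E] [Fintype M] : Fintype (G.addCopies M k).E :=
  inferInstanceAs (Fintype (G.E ⊕ Σ _ : Fin k, M))

lemma sum_addCopies {β : Type*} [AddCommMonoid β] [Fintype G.E] [Fintype M]
    (f : (G.addCopies M k).E → β) :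
    ∑ ee, f ee = ∑ e, f (Sum.inl e) + ∑ i : Fin k, ∑ e : M, f (Sum.inr ⟨i, e⟩) :=
  (Fintype.sum_sum_type f).trans (by rw [Fintype.sum_sigma])

lemma crossSign_addCopies_inl (X : Set G.V) (e : G.E) :
    crossSign (G.addCopies M k).tail (G.addCopies M k).head X (Sum.inl e) =
      crossSign G.tail G.head X e := rfl

lemma crossSign_addCopies_inr (X : Set G.V) (p : Σ _ : Fin k, M) :
    crossSign (G.addCopies M k).tail (G.addCopies M k).head X (Sum.inr p) =
      crossSign G.tail G.head X p.2 := rfl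

lemma netOutflow_alternatingLift [Fintype G.E] [Fintype M]
    (hk : Even k) (σ : G.E → ℝ) (X : Set G.V) :
    netOutflow (G.addCopies M k).tail (G.addCopies M k).head (alternatingLift σ) X =
      netOutflow G.tail G.head σ X := by
  unfold netOutflow
  rw [sum_addCopies]
  simp only [alternatingLift, Sum.elim_inl, Sum.elim_inr, crossSign_addCopies_inl,
    crossSign_addCopies_inr, mul_assoc, ← Finset.mul_sum, ← Finset.sum_mul]
  rw [Fin.sum_univ_eq_sum_range (fun i => (-1 : ℝ) ^ i), neg_one_geom_sum, if_pos hk, zero_mul,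
    add_zero]

lemma ncard_cut_addCopies [Fintype G.E] [Fintype M] (X : Set G.V) :
    (((G.addCopies M k).cut X).ncard : ℝ) =
      (G.cut X).ncard + k * ∑ e : M, |crossSign G.tail G.head X e| := by
  rw [ncard_cut_eq_sum_abs_crossSign]
  refine ((G.addCopies M k).ncard_cut_eq_sum_abs_crossSign X).trans ?_
  rw [sum_addCopies]
  simp only [crossSign_addCopies_inl, crossSign_addCopies_inr, Finset.sum_const,
    Finset.card_univ, Fintype.card_fin, nsmul_eq_mul]

lemma sum_bipartitionSign_mul_crossSign [Fintype G.E] [Fintype M] (hBW : Disjoint B W)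
    (hM : G.IsPerfectMatching M) (hpair : G.Joins M B W) (X : Set G.V) :
    ∑ e : M, bipartitionSign B W (G.tail e) * crossSign G.tail G.head X e =
      ((X ∩ B).ncard : ℝ) - (X ∩ W).ncard := by
  classical
  have := Fintype.ofFinite G.V
  rw [← sum_indicator_bipartitionSign, ← G.sum_tail_add_head_of_isPerfectMatching hM]
  refine Fintype.sum_congr _ _ fun e => ?_
  have hhead : bipartitionSign B W (G.head e) = -bipartitionSign B W (G.tail e) := by
    rcases hpair e e.2 with ⟨h1, h2⟩ | ⟨h1, h2⟩ <;>
      simp [bipartitionSign_of_mem_left hBW, bipartitionSign_of_mem_right hBW, h1, h2]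
  simp only [crossSign, Set.indicator_apply, Pi.one_apply, hhead]
  split_ifs <;> ring

lemma abs_bipartitionSign_tail (hBW : Disjoint B W) (hpair : G.Joins M B W) {e : G.E}
    (he : e ∈ M) : |bipartitionSign B W (G.tail e)| = 1 := by
  rcases hpair e he with ⟨h, -⟩ | ⟨h, -⟩ <;>
    simp [h, bipartitionSign_of_mem_left hBW, bipartitionSign_of_mem_right hBW]

lemma abs_ncard_inter_sub_le [Fintype G.E] [Fintype M] (hBW : Disjoint B W)
    (hM : G.IsPerfectMatching M) (hpair : G.Joins M B W) (X : Set G.V) :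
    |((X ∩ B).ncard : ℝ) - (X ∩ W).ncard| ≤ ∑ e : M, |crossSign G.tail G.head X e| := by
  rw [← sum_bipartitionSign_mul_crossSign hBW hM hpair]
  exact (abs_sum_le_sum_abs _ _).trans_eq (Fintype.sum_congr _ _ fun e => by
    rw [abs_mul, abs_bipartitionSign_tail hBW hpair e.2, one_mul])

theorem exists_sign_netOutflow_eq_ncard_sub [Fintype G.E] (hcubic : G.IsRegular 3)
    (hBW : Disjoint B W) (hM : G.IsPerfectMatching M) (hpair : G.Joins M B W) :
    ∃ σ : G.E → ℝ, (∀ e, |σ e| = 1) ∧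
      ∀ X, netOutflow G.tail G.head σ X = ((X ∩ B).ncard : ℝ) - (X ∩ W).ncard := by
  classical
  obtain ⟨τ, hτ, hτM, hτcirc⟩ := exists_sign_circulation_of_isPerfectMatching hM hcubic
  -- orient `M` from `B` to `W`, and the 2-factor `G - M` along its cycles
  refine ⟨M.indicator (fun e => bipartitionSign B W (G.tail e)) + τ, fun e => ?_, fun X => ?_⟩
  · by_cases he : e ∈ M
    · simpa [he, hτM] using abs_bipartitionSign_tail hBW hpair he
    · simpa [he] using hτ e he
  · rw [netOutflow_add, netOutflow_indicator, hτcirc.netOutflow_eq_zero, add_zero,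
      sum_bipartitionSign_mul_crossSign hBW hM hpair]

theorem hasNZFlow_addCopies_of_isRBipartition (hcubic : G.IsRegular 3) {r : ℝ} (hr : 2 < r)
    (hbip : G.IsRBipartition r B W) (hM : G.IsPerfectMatching M) (hpair : G.Joins M B W)
    (m : ℕ) :
    (G.addCopies M (2 * m)).HasNZFlow (2 + 2 * (r - 2) / (r + (2 * m - 1) * (r - 2))) := by
  classical
  have := Fintype.ofFinite G.E
  have hBW : Disjoint B W := Set.disjoint_iff_inter_eq_empty.2 hbip.2.1
  obtain ⟨σ, hσ, hnet⟩ := exists_sign_netOutflow_eq_ncard_sub hcubic hBW hM hpair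
  set ε := 2 * (r - 2) / (r + (2 * m - 1) * (r - 2))
  have hD : 0 < r + (2 * m - 1) * (r - 2) := by nlinarith [m.cast_nonneg (α := ℝ)]
  have hε : 0 < ε := div_pos (by linarith) hD
  -- `ε` is chosen so that `(2 + ε) / ε = r / (r - 2) + 2 m`
  have hεr : ε * (r / (r - 2) + 2 * m) = 2 + ε := by
    have hεD : ε * (r + (2 * m - 1) * (r - 2)) = 2 * (r - 2) := div_mul_cancel₀ _ hD.ne'
    have hr2 : r / (r - 2) * (r - 2) = r := div_mul_cancel₀ _ (by linarith)
    apply mul_right_cancel₀ (show r - 2 ≠ 0 by linarith)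
    linear_combination ε * hr2 + hεD
  refine hasNZFlow_of_sign_balance _ (by linarith) (abs_alternatingLift hσ)
    fun (X : Set G.V) => ?_
  rw [netOutflow_alternatingLift (even_two_mul m), ncard_cut_addCopies, hnet]
  have hcutG := hbip.2.2 X
  have hcutM := abs_ncard_inter_sub_le hBW hM hpair X
  set d := ((X ∩ B).ncard : ℝ) - (X ∩ W).ncard
  calc (2 + ε) * |d| = ε * (r / (r - 2) * |d| + 2 * m * |d|) := by rw [← hεr]; ring
    _ ≤ ε * ((G.cut X).ncard + 2 * m * ∑ e : M, |crossSign G.tail G.head X e|) := by gcongr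
    _ = (2 + ε - 2) * ((G.cut X).ncard +
          ((2 * m : ℕ) : ℝ) * ∑ e : M, |crossSign G.tail G.head X e|) := by push_cast; ring

end Multigraph

theorem statement_10_general (G : Multigraph) (hcubic : G.IsRegular 3)
    (r : ℝ) (hr : r ∈ Set.Ioo (4 : ℝ) 5) (B W : Set G.V)
    (hbip : G.IsRBipartition r B W) (M : Set G.E) (hM : G.IsPerfectMatching M)
    (hpair : ∀ e ∈ M, (G.tail e ∈ B ∧ G.head e ∈ W) ∨ (G.tail e ∈ W ∧ G.head e ∈ B))
    (t : ℕ) (ht : 1 ≤ t) :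
    (G.addCopies M (2 * t - 2)).HasNZFlow
        (2 + 2 * (r - 2) / (r + (2 * (t : ℝ) - 3) * (r - 2))) ∧
      (G.addCopies M (2 * t - 2)).flowNumber ≤
        ((2 + 2 * (r - 2) / (r + (2 * (t : ℝ) - 3) * (r - 2)) : ℝ) : EReal) := by
  obtain ⟨m, rfl⟩ : ∃ m, t = m + 1 := ⟨t - 1, by omega⟩
  have hcopies : 2 * (m + 1) - 2 = 2 * m := by omega
  have hcoeff : 2 * ((m + 1 : ℕ) : ℝ) - 3 = 2 * m - 1 := by push_cast; ring
  rw [hcopies, hcoeff]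
  have hr2 : 2 < r := by linarith [hr.1]
  have hflow := G.hasNZFlow_addCopies_of_isRBipartition hcubic hr2 hbip hM hpair m
  have hD : 0 < r + (2 * m - 1) * (r - 2) := by nlinarith [m.cast_nonneg (α := ℝ)]
  refine ⟨hflow, sInf_le ⟨_, rfl, ?_, hflow⟩⟩
  have := div_pos (by linarith : (0 : ℝ) < 2 * (r - 2)) hD
  linarith

/-- if a bridgeless cubic graph `G` has an `r`-bipartition
(`4 < r < 5`) whose color classes are paired by a perfect matching `M`, then for
every `t ≥ 1` the `(2t+1)`-regular multigraph `G + (2t-2)M` admits a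
nowhere-zero `(2 + 2(r-2)/(r + (2t-3)(r-2)))`-flow; in particular its circular
flow number is at most this value. -/
theorem statement_10 (G : Multigraph) (hbl : G.Bridgeless) (hcubic : G.IsRegular 3)
    (r : ℝ) (hr : r ∈ Set.Ioo (4 : ℝ) 5) (B W : Set G.V)
    (hbip : G.IsRBipartition r B W) (M : Set G.E) (hM : G.IsPerfectMatching M)
    (hpair : ∀ e ∈ M, (G.tail e ∈ B ∧ G.head e ∈ W) ∨ (G.tail e ∈ W ∧ G.head e ∈ B))
    (t : ℕ) (ht : 1 ≤ t) :
    (G.addCopies M (2 * t - 2)).HasNZFlow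
        (2 + 2 * (r - 2) / (r + (2 * (t : ℝ) - 3) * (r - 2))) ∧
      (G.addCopies M (2 * t - 2)).flowNumber ≤
        ((2 + 2 * (r - 2) / (r + (2 * (t : ℝ) - 3) * (r - 2)) : ℝ) : EReal) :=
  statement_10_general G hcubic r hr B W hbip M hM hpair t ht
end

section
/- For every integer n ≥ 1, the Flower snark J_{2n+1} admits a nowhere-zero (4 + 1/n)-flow; in particular φ_c(J_{2n+1}) ≤ 4 + 1/n. -/
/-- The Flower snark `J_{2n+1}` (for `n ≥ 1`): vertices `(i, 0) = a_i`,
`(i, 1) = b_i`, `(i, 2) = c_i`, `(i, 3) = d_i` for `i ∈ ℤ_{2n+1}`, and for each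
`i` the six edges `b_i a_i`, `b_i c_i`, `b_i d_i`, `a_i a_{i+1}`, `c_i d_{i+1}`,
`c_{i+1} d_i` (indexed by `(i, j)`, `j ∈ Fin 6`, in this order). -/
noncomputable def flowerSnark (n : ℕ) (hn : 1 ≤ n) : Multigraph where
  V := ZMod (2 * n + 1) × Fin 4
  E := ZMod (2 * n + 1) × Fin 6
  vFinite := by
    haveI : NeZero (2 * n + 1) := ⟨Nat.succ_ne_zero _⟩
    infer_instance
  eFinite := by
    haveI : NeZero (2 * n + 1) := ⟨Nat.succ_ne_zero _⟩
    infer_instance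
  ends := fun e =>
    if e.2 = 0 then ((e.1, 1), (e.1, 0))           -- b_i a_i
    else if e.2 = 1 then ((e.1, 1), (e.1, 2))      -- b_i c_i
    else if e.2 = 2 then ((e.1, 1), (e.1, 3))      -- b_i d_i
    else if e.2 = 3 then ((e.1, 0), (e.1 + 1, 0))  -- a_i a_{i+1}
    else if e.2 = 4 then ((e.1, 2), (e.1 + 1, 3))  -- c_i d_{i+1}
    else ((e.1 + 1, 2), (e.1, 3))                  -- c_{i+1} d_i
  no_loop := by
    haveI : Fact (1 < 2 * n + 1) := ⟨by omega⟩
    rintro ⟨i, j⟩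
    fin_cases j <;> simp [Prod.ext_iff]

/-!
Dividing by `n`, it suffices to find an integer flow on `J_{2n+1}` whose values all have
absolute value between `n` and `3n + 1`. One is written down explicitly. Along the outer cycle
`a_0 a_1 ⋯ a_{2n}` the flow has magnitudes `2n+1, n+1, 2n+2, n+2, …, 2n, 3n+1`: each spoke
`b_i a_i` with `i` odd feeds `n` into the cycle and each one with `i ≥ 2` even drains `n + 1`,
which keeps every value in range; the spoke at `a_0` closes the cycle of odd length.
-/

namespace Multigraph

variable {G : Multigraph}

def IsCirculation (G : Multigraph) {A : Type*} [AddCommMonoid A] (f : G.E → A) : Prop :=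
  ∀ v, ∑ᶠ e ∈ {e | G.tail e = v}, f e = ∑ᶠ e ∈ {e | G.head e = v}, f e

theorem IsCirculation.map {A B : Type*} [AddCommMonoid A] [AddCommMonoid B] {f : G.E → A}
    (hf : G.IsCirculation f) (φ : A →+ B) : G.IsCirculation (φ ∘ f) := fun v => by
  simp only [Function.comp_apply, ← φ.map_finsum_mem _ (Set.toFinite _), hf v]

theorem IsCirculation.isNZFlow_div {k m : ℕ} {g : G.E → ℤ} (hg : G.IsCirculation g)
    (hk : 0 < k) (hbound : ∀ e, (k : ℤ) ≤ |g e| ∧ |g e| ≤ m) :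
    G.IsNZFlow (1 + m / k) (fun e => (g e : ℝ) / k) := by
  have hkR : (0 : ℝ) < k := by exact_mod_cast hk
  refine ⟨fun e => ?_, ?_⟩
  · obtain ⟨hlow, hup⟩ := hbound e
    rw [abs_div, abs_of_pos hkR, add_sub_cancel_left, le_div_iff₀ hkR, one_mul,
      div_le_div_iff_of_pos_right hkR]
    exact ⟨by exact_mod_cast hlow, by exact_mod_cast hup⟩
  · show G.IsCirculation _
    have hscale : (fun e => (g e : ℝ) / k) =
        (AddMonoidHom.mulRight (k : ℝ)⁻¹).comp (Int.castAddHom ℝ) ∘ g := by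
      ext e
      simp [div_eq_mul_inv]
    exact hscale ▸ hg.map _

theorem HasNZFlow.flowNumber_le {r : ℝ} (hr : 2 ≤ r) (h : G.HasNZFlow r) :
    G.flowNumber ≤ (r : EReal) :=
  sInf_le ⟨r, rfl, hr, h⟩

end Multigraph

theorem ZMod.val_sub_one_eq_ite (m : ℕ) (i : ZMod (m + 1)) :
    (i - 1).val = if i.val = 0 then m else i.val - 1 := by
  split_ifs with hi
  · rw [(ZMod.val_eq_zero i).mp hi, zero_sub, ZMod.val_neg_one]
  · have hlt := ZMod.val_lt i
    have hcast : i - 1 = ((i.val - 1 : ℕ) : ZMod (m + 1)) := by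
      rw [Nat.cast_sub (Nat.one_le_iff_ne_zero.mpr hi), ZMod.natCast_zmod_val, Nat.cast_one]
    rw [hcast, ZMod.val_natCast_of_lt (by omega)]

section FlowerSnark

open Multigraph

variable (n : ℕ) (hn : 1 ≤ n) (i : ZMod (2 * n + 1))

theorem flowerSnark_setOf_tail_eq_a :
    {e : ZMod (2 * n + 1) × Fin 6 | (flowerSnark n hn).tail e = (i, 0)} =
      {(i, 3)} := by
  ext ⟨j, l⟩
  fin_cases l <;> simp [flowerSnark, tail, Prod.ext_iff]

theorem flowerSnark_setOf_head_eq_a :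
    {e : ZMod (2 * n + 1) × Fin 6 | (flowerSnark n hn).head e = (i, 0)} =
      {(i, 0), (i - 1, 3)} := by
  ext ⟨j, l⟩
  fin_cases l <;> simp [flowerSnark, head, Prod.ext_iff, eq_sub_iff_add_eq]

theorem flowerSnark_setOf_tail_eq_b :
    {e : ZMod (2 * n + 1) × Fin 6 | (flowerSnark n hn).tail e = (i, 1)} =
      {(i, 0), (i, 1), (i, 2)} := by
  ext ⟨j, l⟩
  fin_cases l <;> simp [flowerSnark, tail, Prod.ext_iff]

theorem flowerSnark_setOf_head_eq_b :
    {e : ZMod (2 * n + 1) × Fin 6 | (flowerSnark n hn).head e = (i, 1)} =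
      ∅ := by
  ext ⟨j, l⟩
  fin_cases l <;> simp [flowerSnark, head, Prod.ext_iff]

theorem flowerSnark_setOf_tail_eq_c :
    {e : ZMod (2 * n + 1) × Fin 6 | (flowerSnark n hn).tail e = (i, 2)} =
      {(i, 4), (i - 1, 5)} := by
  ext ⟨j, l⟩
  fin_cases l <;> simp [flowerSnark, tail, Prod.ext_iff, eq_sub_iff_add_eq]

theorem flowerSnark_setOf_head_eq_c :
    {e : ZMod (2 * n + 1) × Fin 6 | (flowerSnark n hn).head e = (i, 2)} =
      {(i, 1)} := by
  ext ⟨j, l⟩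
  fin_cases l <;> simp [flowerSnark, head, Prod.ext_iff]

theorem flowerSnark_setOf_tail_eq_d :
    {e : ZMod (2 * n + 1) × Fin 6 | (flowerSnark n hn).tail e = (i, 3)} =
      ∅ := by
  ext ⟨j, l⟩
  fin_cases l <;> simp [flowerSnark, tail, Prod.ext_iff]

theorem flowerSnark_setOf_head_eq_d :
    {e : ZMod (2 * n + 1) × Fin 6 | (flowerSnark n hn).head e = (i, 3)} =
      {(i, 2), (i - 1, 4), (i, 5)} := by
  ext ⟨j, l⟩
  fin_cases l <;> simp [flowerSnark, head, Prod.ext_iff, eq_sub_iff_add_eq]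

theorem flowerSnark_isCirculation {A : Type*} [AddCommMonoid A]
    (f : ZMod (2 * n + 1) × Fin 6 → A)
    (ha : ∀ i, f (i, 3) = f (i, 0) + f (i - 1, 3))
    (hb : ∀ i, f (i, 0) + f (i, 1) + f (i, 2) = 0)
    (hc : ∀ i, f (i, 4) + f (i - 1, 5) = f (i, 1))
    (hd : ∀ i, f (i, 2) + f (i - 1, 4) + f (i, 5) = 0) :
    (flowerSnark n hn).IsCirculation f := by
  rintro ⟨i, k⟩
  -- `(flowerSnark n hn).E` is only definitionally `ZMod (2 * n + 1) × Fin 6`; the sums must be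
  -- restated over the latter for the set lemmas above and the `finsum_mem` lemmas to rewrite.
  change ∑ᶠ e ∈ {e : ZMod (2 * n + 1) × Fin 6 | (flowerSnark n hn).tail e = (i, k)}, f e =
    ∑ᶠ e ∈ {e : ZMod (2 * n + 1) × Fin 6 | (flowerSnark n hn).head e = (i, k)}, f e
  match k with
  | 0 =>
    rw [flowerSnark_setOf_tail_eq_a, flowerSnark_setOf_head_eq_a, finsum_mem_singleton,
      finsum_mem_pair (by simp), ha]
  | 1 =>
    rw [flowerSnark_setOf_tail_eq_b, flowerSnark_setOf_head_eq_b,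
      finsum_mem_insert _ (by simp) (Set.toFinite _), finsum_mem_pair (by simp), finsum_mem_empty,
      ← add_assoc, hb]
  | 2 =>
    rw [flowerSnark_setOf_tail_eq_c, flowerSnark_setOf_head_eq_c, finsum_mem_pair (by simp),
      finsum_mem_singleton, hc]
  | 3 =>
    rw [flowerSnark_setOf_tail_eq_d, flowerSnark_setOf_head_eq_d, finsum_mem_empty,
      finsum_mem_insert _ (by simp) (Set.toFinite _), finsum_mem_pair (by simp), ← add_assoc, hd]

end FlowerSnark

/-- Row `q = i.val` lists the values on the six edges with index `i`, in the order
`b_i a_i, b_i c_i, b_i d_i, a_i a_{i+1}, c_i d_{i+1}, c_{i+1} d_i` of `flowerSnark`. -/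
def flowerSnarkIntFlow (n q : ℕ) : Fin 6 → ℤ
  | 0 => if q = 0 ∨ q % 2 = 1 then n else -(n + 1)
  | 1 => if q = 1 then -(2 * n) else if q = 0 ∨ q % 2 = 1 then -(2 * n + 1) else -n
  | 2 => if q = 1 then n else if q = 0 ∨ q % 2 = 1 then n + 1 else 2 * n + 1
  | 3 => if q % 2 = 0 then -(2 * n + 1 + q / 2) else -(n + (q + 1) / 2)
  | 4 => if q ≤ 2 ∨ q % 2 = 1 then n else n + q / 2 - 1
  | 5 => if q = 0 then -(3 * n) else if q % 2 = 0 then -(3 * n + 1)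
      else -(2 * n - 1 + (q + 1) / 2)

theorem flowerSnarkIntFlow_bounds {n q : ℕ} (hn : 1 ≤ n) (hq : q ≤ 2 * n) (l : Fin 6) :
    (n : ℤ) ≤ |flowerSnarkIntFlow n q l| ∧ |flowerSnarkIntFlow n q l| ≤ 3 * n + 1 := by
  fin_cases l <;> simp only [flowerSnarkIntFlow] <;>
    constructor <;> (first | rw [le_abs] | rw [abs_le]) <;> split_ifs <;> omega

theorem flowerSnarkIntFlow_isCirculation (n : ℕ) (hn : 1 ≤ n) :
    (flowerSnark n hn).IsCirculation
      (fun e : ZMod (2 * n + 1) × Fin 6 => flowerSnarkIntFlow n e.1.val e.2) := by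
  apply flowerSnark_isCirculation <;> intro i <;> have hi := ZMod.val_lt i <;>
    simp only [ZMod.val_sub_one_eq_ite, flowerSnarkIntFlow] <;> split_ifs <;> omega

theorem flowerSnark_hasNZFlow (n : ℕ) (hn : 1 ≤ n) :
    (flowerSnark n hn).HasNZFlow (4 + 1 / n) := by
  have hr : (4 + 1 / n : ℝ) = 1 + ((3 * n + 1 : ℕ) : ℝ) / n := by
    field_simp
    push_cast
    ring
  rw [hr]
  refine ⟨_, (flowerSnarkIntFlow_isCirculation n hn).isNZFlow_div hn fun e => ?_⟩
  push_cast
  exact flowerSnarkIntFlow_bounds hn (Nat.le_of_lt_succ (ZMod.val_lt e.1)) e.2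

/-- for every `n ≥ 1`, the Flower snark `J_{2n+1}` admits a
nowhere-zero `(4 + 1/n)`-flow; in particular `φ_c(J_{2n+1}) ≤ 4 + 1/n`. -/
theorem statement_13 (n : ℕ) (hn : 1 ≤ n) :
    (flowerSnark n hn).HasNZFlow (4 + 1 / (n : ℝ)) ∧
      (flowerSnark n hn).flowNumber ≤ ((4 + 1 / (n : ℝ) : ℝ) : EReal) := by
  have hflow := flowerSnark_hasNZFlow n hn
  refine ⟨hflow, hflow.flowNumber_le ?_⟩
  have : (0 : ℝ) ≤ 1 / n := by positivity
  linarith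
end

section
/- Let G be a cubic graph with a perfect matching M and let t ≥ 1 be an integer. If the (2t+1)-regular multigraph H = G + (2t−2)M has a perfect matching N such that H − N is bipartite, then G has a perfect matching N′ such that G − N′ is bipartite; consequently G is class 1 (admits a proper 3-edge-coloring). -/
/-!
Projecting the edges of `H = G + kM` back to `G` turns `N` into a perfect matching `N'` of `G`,
and `G - N'` is a subgraph of `H - N`, hence bipartite. As `G` is cubic, `G - N'` is 2-regular
and bipartite, so it is 2-edge-colorable, and `N'` supplies the third color.

To 2-color a 2-regular bipartite graph, let `f` (resp. `g`) send an edge to the other edge at its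
black (resp. white) end. These are fixed-point-free involutions, and a coloring alternating
under both exists because `x` and `f x` always lie in different cycles of `f * g`, while `g x`
lies in the cycle of `f x`.
-/

namespace Equiv.Perm

variable {α : Type*}

theorem apply_zpow_apply_of_conj_eq_inv {p σ : Perm α} (h : p * σ * p⁻¹ = σ⁻¹) (k : ℤ)
    (x : α) : p ((σ ^ k) x) = (σ ^ (-k)) (p x) := by
  rw [zpow_neg, ← inv_zpow, ← h, conj_zpow]
  simp

theorem not_sameCycle_mul_apply_left {f g : Perm α} (hf : Function.Involutive f)
    (hg : Function.Involutive g) (hf₀ : ∀ x, f x ≠ x) (hg₀ : ∀ x, g x ≠ x) (x : α) :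
    ¬ (f * g).SameCycle x (f x) := by
  set σ := f * g with hσ
  have hff : f * f = 1 := Equiv.ext fun y => hf y
  have hgg : g * g = 1 := Equiv.ext fun y => hg y
  have hσinv : σ⁻¹ = g * f := by
    rw [hσ, mul_inv_rev, inv_eq_of_mul_eq_one_right hff, inv_eq_of_mul_eq_one_right hgg]
  have hconj_f : f * σ * f⁻¹ = σ⁻¹ := by
    rw [hσinv, inv_eq_of_mul_eq_one_right hff, hσ, ← mul_assoc, hff, one_mul]
  have hconj_g : g * σ * g⁻¹ = σ⁻¹ := by
    rw [hσinv, inv_eq_of_mul_eq_one_right hgg, hσ]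
    simp only [mul_assoc, hgg, mul_one]
  rintro ⟨k, hk⟩
  -- for `k = 2m` the point `σ ^ m x` is fixed by `f`, for `k = 2m + 1` it is fixed by `g`
  obtain ⟨m, rfl | rfl⟩ := Int.even_or_odd' k
  · apply hf₀ ((σ ^ m) x)
    rw [apply_zpow_apply_of_conj_eq_inv hconj_f, ← hk, ← mul_apply, ← zpow_add]
    congr 2; ring
  · apply hg₀ ((σ ^ m) x)
    have hgx : g x = (σ ^ (-1 : ℤ)) (f x) := by
      rw [zpow_neg_one, hσinv, mul_apply, hf x]
    rw [apply_zpow_apply_of_conj_eq_inv hconj_g, hgx, ← hk, ← mul_apply,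
      ← mul_apply, ← zpow_add, ← zpow_add]
    congr 2; ring

theorem exists_bool_apply_eq_not_of_involutive {f g : α → α} (hf : Function.Involutive f)
    (hg : Function.Involutive g) (hf₀ : ∀ x, f x ≠ x) (hg₀ : ∀ x, g x ≠ x) :
    ∃ c : α → Bool, (∀ x, c (f x) = !c x) ∧ ∀ x, c (g x) = !c x := by
  classical
  let σ := hf.toPerm f * hg.toPerm g
  let q : α → Quotient (SameCycle.setoid σ) := Quotient.mk _
  let _ : LinearOrder (Quotient (SameCycle.setoid σ)) := linearOrderOfSTO WellOrderingRel
  have hflip : ∀ x, decide (q (f x) < q x) = !decide (q x < q (f x)) := by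
    intro x
    have hne : q x ≠ q (f x) := fun h =>
      not_sameCycle_mul_apply_left (f := hf.toPerm f) (g := hg.toPerm g) hf hg hf₀ hg₀ x
        (Quotient.exact h)
    rcases lt_or_gt_of_ne hne with h | h <;> simp [h, lt_asymm h]
  -- `σ` maps `g x` to `f x` and `x` to `f (g x)`, so `c (g x)` compares the same two classes
  have hqg : ∀ x, q (g x) = q (f x) := fun x => Quotient.sound ⟨1, by simp [σ, hg x]⟩
  have hqfg : ∀ x, q (f (g x)) = q x := fun x => Quotient.sound (SameCycle.symm ⟨1, by simp [σ]⟩)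
  refine ⟨fun x => decide (q x < q (f x)), fun x => ?_, fun x => ?_⟩
  · simp only [hf x, hflip]
  · simp only [hqg, hqfg, hflip]

end Equiv.Perm

namespace Multigraph

variable {G : Multigraph}

def baseEdge {k : ℕ} (M : Fin k → Set G.E) : (G.addEdgeFamily M).E → G.E :=
  Sum.elim id fun p => p.2.1

theorem inc_addEdgeFamily_iff {k : ℕ} {M : Fin k → Set G.E} {v : G.V}
    {f : (G.addEdgeFamily M).E} : (G.addEdgeFamily M).Inc v f ↔ G.Inc v (G.baseEdge M f) := by
  rcases f with f | f <;> rfl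

theorem IsPerfectMatching.image_baseEdge {k : ℕ} {M : Fin k → Set G.E}
    {N : Set (G.addEdgeFamily M).E} (hN : (G.addEdgeFamily M).IsPerfectMatching N) :
    G.IsPerfectMatching (G.baseEdge M '' N) := by
  intro v
  obtain ⟨f, ⟨hfN, hfv⟩, hf⟩ := hN v
  refine ⟨G.baseEdge M f, ⟨⟨f, hfN, rfl⟩, inc_addEdgeFamily_iff.1 hfv⟩, ?_⟩
  rintro _ ⟨⟨f', hf'N, rfl⟩, hf'v⟩
  rw [hf f' ⟨hf'N, inc_addEdgeFamily_iff.2 hf'v⟩]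

theorem IsBipartite.deleteEdges_image_baseEdge {k : ℕ} {M : Fin k → Set G.E}
    {N : Set (G.addEdgeFamily M).E} (hbip : ((G.addEdgeFamily M).deleteEdges N).IsBipartite) :
    (G.deleteEdges (G.baseEdge M '' N)).IsBipartite := by
  obtain ⟨s, hs⟩ := hbip
  exact ⟨s, fun ⟨e, he⟩ => hs ⟨Sum.inl e, fun h => he ⟨Sum.inl e, h, rfl⟩⟩⟩

theorem exists_other_inc_of_isRegular_two (hG : G.IsRegular 2) {v : G.V} {e : G.E}
    (he : G.Inc v e) : ∃ e', G.Inc v e' ∧ e' ≠ e ∧ ∀ y, G.Inc v y → y ≠ e → y = e' := by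
  obtain ⟨a, b, hab, huniv⟩ := Nat.card_eq_two_iff.1 (hG v)
  have hmem : ∀ y (hy : G.Inc v y), y = a ∨ y = b := fun y hy => by
    have : (⟨y, hy⟩ : {e // G.Inc v e}) ∈ ({a, b} : Set _) := huniv ▸ Set.mem_univ _
    rcases this with h | h
    · exact Or.inl (congrArg Subtype.val h)
    · exact Or.inr (congrArg Subtype.val h)
  have hab' : a.1 ≠ b.1 := fun h => hab (Subtype.ext h)
  rcases hmem e he with rfl | rfl
  · exact ⟨b, b.2, hab'.symm, fun y hy hye => (hmem y hy).resolve_left hye⟩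
  · exact ⟨a, a.2, hab', fun y hy hye => (hmem y hy).resolve_right hye⟩

def sideEnd (side : G.V → Bool) (b : Bool) (e : G.E) : G.V :=
  if side (G.tail e) = b then G.tail e else G.head e

theorem inc_sideEnd (side : G.V → Bool) (b : Bool) (e : G.E) :
    G.Inc (G.sideEnd side b e) e := by
  unfold sideEnd Inc; split_ifs <;> simp

theorem side_sideEnd {side : G.V → Bool} (hside : ∀ e, side (G.tail e) ≠ side (G.head e))
    (b : Bool) (e : G.E) : side (G.sideEnd side b e) = b := by
  unfold sideEnd
  have := hside e
  split_ifs with h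
  · exact h
  · revert h this; cases side (G.tail e) <;> cases side (G.head e) <;> cases b <;> simp

theorem sideEnd_eq {side : G.V → Bool} (hside : ∀ e, side (G.tail e) ≠ side (G.head e))
    {b : Bool} {v : G.V} {e : G.E} (he : G.Inc v e) (hv : side v = b) :
    G.sideEnd side b e = v := by
  unfold sideEnd
  rcases he with rfl | rfl
  · simp [hv]
  · have := hside e
    split_ifs with h
    · exact absurd (h.trans hv.symm) this
    · rfl

theorem exists_properEdgeColoring_fin_two_of_isRegular_two (hG : G.IsRegular 2)
    (hbip : G.IsBipartite) : ∃ c : G.E → Fin 2, G.IsProperEdgeColoring c := by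
  classical
  obtain ⟨s, hs⟩ := hbip
  let side : G.V → Bool := fun v => decide (v ∈ s)
  have hside : ∀ e, side (G.tail e) ≠ side (G.head e) := fun e h =>
    hs e (by simpa [side] using h)
  choose! partner hpartner using fun (v : G.V) (e : G.E) (he : G.Inc v e) =>
    exists_other_inc_of_isRegular_two hG he
  let other : Bool → G.E → G.E := fun b e => partner (G.sideEnd side b e) e
  have other_eq : ∀ {b v e e'}, G.Inc v e → G.Inc v e' → e' ≠ e → side v = b → other b e = e' :=
    fun {b v e e'} he he' hne hv => by
      simp only [other, sideEnd_eq hside he hv]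
      exact ((hpartner v e he).2.2 e' he' hne).symm
  have hother : ∀ b e, G.Inc (G.sideEnd side b e) (other b e) ∧ other b e ≠ e := fun b e =>
    ⟨(hpartner _ e (inc_sideEnd side b e)).1, (hpartner _ e (inc_sideEnd side b e)).2.1⟩
  have hinv : ∀ b, Function.Involutive (other b) := fun b e =>
    other_eq (hother b e).1 (inc_sideEnd side b e) (hother b e).2.symm (side_sideEnd hside b e)
  obtain ⟨c, hct, hcf⟩ := Equiv.Perm.exists_bool_apply_eq_not_of_involutive (hinv true)
    (hinv false) (fun e => (hother true e).2) (fun e => (hother false e).2)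
  have hc : ∀ b e, c (other b e) = !c e := by
    intro b; cases b
    exacts [hcf, hct]
  refine ⟨fun e => finTwoEquiv.symm (c e), ?_⟩
  rintro e e' ⟨hne, v, he, he'⟩
  apply finTwoEquiv.symm.injective.ne
  rw [← other_eq he he' (Ne.symm hne) rfl, hc]
  exact (Bool.not_ne_self _).symm

theorem degree_deleteEdges (S : Set G.E) (v : G.V) :
    (G.deleteEdges S).degree v = ({e | G.Inc v e} \ S).ncard := by
  rw [← Nat.card_coe_set_eq]
  exact Nat.card_congr ((Equiv.subtypeSubtypeEquivSubtypeInter (· ∉ S) (G.Inc v)).trans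
    (Equiv.subtypeEquivRight fun _ => and_comm))

theorem isRegular_deleteEdges_of_isPerfectMatching {k : ℕ} (hG : G.IsRegular (k + 1))
    {N : Set G.E} (hN : G.IsPerfectMatching N) : (G.deleteEdges N).IsRegular k := by
  intro (v : G.V)
  obtain ⟨m, ⟨hmN, hmv⟩, hm⟩ := hN v
  have hinc : N ∩ {e | G.Inc v e} = {m} :=
    Set.eq_singleton_iff_unique_mem.2 ⟨⟨hmN, hmv⟩, fun e he => hm e he⟩
  have hdeg : {e | G.Inc v e}.ncard = k + 1 := by rw [← Nat.card_coe_set_eq]; exact hG v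
  rw [degree_deleteEdges, ← Set.sdiff_inter_self_eq_sdiff, hinc,
    Set.ncard_sdiff_singleton_of_mem (s := {e | G.Inc v e}) hmv, hdeg, Nat.add_sub_cancel]

theorem exists_properEdgeColoring_succ_of_deleteEdges {k : ℕ} {N : Set G.E}
    (hN : G.IsPerfectMatching N) {c : (G.deleteEdges N).E → Fin k}
    (hc : (G.deleteEdges N).IsProperEdgeColoring c) :
    ∃ c' : G.E → Fin (k + 1), G.IsProperEdgeColoring c' := by
  classical
  refine ⟨fun e => if h : e ∈ N then Fin.last k else (c ⟨e, h⟩).castSucc, ?_⟩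
  rintro e e' ⟨hne, v, he, he'⟩
  by_cases h : e ∈ N <;> by_cases h' : e' ∈ N <;> simp only [h, h', dite_true, dite_false]
  · obtain ⟨m, -, hm⟩ := hN v
    exact absurd ((hm e ⟨h, he⟩).trans (hm e' ⟨h', he'⟩).symm) hne
  · exact (Fin.castSucc_lt_last _).ne'
  · exact (Fin.castSucc_lt_last _).ne
  · exact Fin.castSucc_injective k |>.ne <| hc ⟨e, h⟩ ⟨e', h'⟩
      ⟨fun heq => hne (congrArg Subtype.val heq), v, he, he'⟩

theorem exists_properEdgeColoring_fin_three (hG : G.IsRegular 3) {N : Set G.E}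
    (hN : G.IsPerfectMatching N) (hbip : (G.deleteEdges N).IsBipartite) :
    ∃ c : G.E → Fin 3, G.IsProperEdgeColoring c :=
  let ⟨_, hc⟩ := exists_properEdgeColoring_fin_two_of_isRegular_two
    (isRegular_deleteEdges_of_isPerfectMatching hG hN) hbip
  exists_properEdgeColoring_succ_of_deleteEdges hN hc

theorem degree_le_of_isProperEdgeColoring {k : ℕ} {c : G.E → Fin k}
    (hc : G.IsProperEdgeColoring c) (v : G.V) : G.degree v ≤ k := by
  have hinj : Function.Injective fun e : {e // G.Inc v e} => c e := fun e e' h => by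
    by_contra hne
    exact hc e e' ⟨fun h' => hne (Subtype.ext h'), v, e.2, e'.2⟩ h
  simpa [degree] using Nat.card_le_card_of_injective _ hinj

theorem chromaticIndex_le_of_isProperEdgeColoring {k : ℕ} {c : G.E → Fin k}
    (hc : G.IsProperEdgeColoring c) : G.chromaticIndex ≤ k :=
  Nat.sInf_le ⟨c, hc⟩

theorem isClass1_of_isRegular {k : ℕ} (hG : G.IsRegular k) {c : G.E → Fin k}
    (hc : G.IsProperEdgeColoring c) : G.IsClass1 := by
  have hmax : G.maxDegree ≤ G.chromaticIndex :=
    csSup_le' <| Set.forall_mem_range.2 fun v =>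
      le_csInf ⟨k, c, hc⟩ fun _ ⟨_, hc'⟩ => degree_le_of_isProperEdgeColoring hc' v
  rcases isEmpty_or_nonempty G.V with hV | hV
  · have : IsEmpty G.E := ⟨fun e => hV.false (G.tail e)⟩
    exact le_antisymm
      (chromaticIndex_le_of_isProperEdgeColoring (c := isEmptyElim) isEmptyElim) hmax
  · obtain ⟨v⟩ := hV
    have : k ≤ G.maxDegree := by
      rw [← hG v]; exact le_csSup (Set.finite_range G.degree).bddAbove (Set.mem_range_self v)
    exact le_antisymm ((chromaticIndex_le_of_isProperEdgeColoring hc).trans this) hmax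

end Multigraph

open Multigraph

theorem statement_19_general (G : Multigraph) (hcubic : G.IsRegular 3) (M : Set G.E)
    (t : ℕ)
    (N : Set (G.addCopies M (2 * t - 2)).E)
    (hN : (G.addCopies M (2 * t - 2)).IsPerfectMatching N)
    (hbip : ((G.addCopies M (2 * t - 2)).deleteEdges N).IsBipartite) :
    (∃ N' : Set G.E, G.IsPerfectMatching N' ∧ (G.deleteEdges N').IsBipartite) ∧
      G.IsClass1 ∧ ∃ c : G.E → Fin 3, G.IsProperEdgeColoring c := by
  have hN' := hN.image_baseEdge
  have hbip' := hbip.deleteEdges_image_baseEdge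
  obtain ⟨c, hc⟩ := exists_properEdgeColoring_fin_three hcubic hN' hbip'
  exact ⟨⟨_, hN', hbip'⟩, isClass1_of_isRegular hcubic hc, c, hc⟩

/-- let `G` be a cubic graph with a perfect matching `M` and let
`t ≥ 1`.  If `H = G + (2t-2)M` has a perfect matching `N` with `H - N`
bipartite, then `G` has a perfect matching `N'` with `G - N'` bipartite;
consequently `G` is class 1 (it admits a proper 3-edge-coloring). -/
theorem statement_19 (G : Multigraph) (hcubic : G.IsRegular 3) (M : Set G.E)
    (hM : G.IsPerfectMatching M) (t : ℕ) (ht : 1 ≤ t)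
    (N : Set (G.addCopies M (2 * t - 2)).E)
    (hN : (G.addCopies M (2 * t - 2)).IsPerfectMatching N)
    (hbip : ((G.addCopies M (2 * t - 2)).deleteEdges N).IsBipartite) :
    (∃ N' : Set G.E, G.IsPerfectMatching N' ∧ (G.deleteEdges N').IsBipartite) ∧
      G.IsClass1 ∧ ∃ c : G.E → Fin 3, G.IsProperEdgeColoring c :=
  statement_19_general G hcubic M t N hN hbip
end
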